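/- Let ρ_1, …, ρ_n be star-shaped risk measures on 𝒳 satisfying the normality condition: Σ_{i=1}^n ρ_i(Z_i) ≥ 0 for all Z_1, …, Z_n ∈ 𝒳 with Σ_{i=1}^n Z_i = 0. Then the inf-convolution ρ_⋄(X) = inf{ Σ_{i=1}^n ρ_i(Y_i) : Y_1, …, Y_n ∈ 𝒳 and Σ_{i=1}^n Y_i = X } is finite for every X ∈ 𝒳 and defines a star-shaped risk measure on 𝒳. -/

import Mathlib

/-!
A decomposition `Y` of `X` can be moved by changing one fixed component `Y j` into `Y j - g`,
which gives a decomposition of `X - g`. With `g = X` this yields a decomposition of `0`, so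
normality together with monotonicity and translation invariance of `ρ j` bounds every value for
`X` below by `-‖X‖`. With `g = X - Y ≥ 0`, resp. `g` constant, the same move transfers
monotonicity, resp. translation invariance, from `ρ j` to the inf-convolution. Star-shapedness
passes over because `Y ↦ l⁻¹ • Y` maps decompositions of `l • X` to decompositions of `X`.
-/

open BoundedContinuousFunction

def IsRiskMeasure {Ω : Type*} [TopologicalSpace Ω] (ρ : (Ω →ᵇ ℝ) → ℝ) : Prop :=
  (∀ X Y : Ω →ᵇ ℝ, Y ≤ X → ρ Y ≤ ρ X) ∧
  (∀ (X : Ω →ᵇ ℝ) (m : ℝ), ρ (X - const Ω m) = ρ X - m) ∧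
  ρ 0 = 0

def IsStarShaped {Ω : Type*} [TopologicalSpace Ω] (ρ : (Ω →ᵇ ℝ) → ℝ) : Prop :=
  ∀ (X : Ω →ᵇ ℝ) (l : ℝ), 1 < l → l * ρ X ≤ ρ (l • X)

/-- The set of values of decompositions of `X` appearing in the inf-convolution. -/
def infConvValues {Ω : Type*} [TopologicalSpace Ω] {n : ℕ}
    (ρ : Fin n → (Ω →ᵇ ℝ) → ℝ) (X : Ω →ᵇ ℝ) : Set ℝ :=
  {s : ℝ | ∃ Y : Fin n → (Ω →ᵇ ℝ), (∑ i, Y i) = X ∧ s = ∑ i, ρ i (Y i)}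

/-- The inf-convolution `ρ_⋄` of the risk measures `ρ i`. -/
noncomputable def infConv {Ω : Type*} [TopologicalSpace Ω] {n : ℕ}
    (ρ : Fin n → (Ω →ᵇ ℝ) → ℝ) (X : Ω →ᵇ ℝ) : ℝ :=
  sInf (infConvValues ρ X)

open Function (update apply_update)

lemma Finset.sum_update_eq_sub_add {ι M : Type*} [Fintype ι] [DecidableEq ι] [AddCommGroup M]
    (f : ι → M) (j : ι) (b : M) : ∑ i, update f j b i = ∑ i, f i - f j + b := by
  rw [Finset.sum_update_of_mem (Finset.mem_univ j),
    Finset.sum_eq_add_sum_sdiff_singleton_of_mem (Finset.mem_univ j) f]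
  abel

namespace IsRiskMeasure

variable {Ω : Type*} [TopologicalSpace Ω] {ρ : (Ω →ᵇ ℝ) → ℝ}

lemma monotone (hρ : IsRiskMeasure ρ) : Monotone ρ :=
  fun Y X h => hρ.1 X Y h

lemma map_add_const (hρ : IsRiskMeasure ρ) (X : Ω →ᵇ ℝ) (m : ℝ) :
    ρ (X + const Ω m) = ρ X + m := by
  have h := hρ.2.1 (X + const Ω m) m
  rw [add_sub_cancel_right] at h
  linarith

lemma map_sub_le_add_norm (hρ : IsRiskMeasure ρ) (Y X : Ω →ᵇ ℝ) :
    ρ (Y - X) ≤ ρ Y + ‖X‖ := by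
  calc ρ (Y - X) ≤ ρ (Y + const Ω ‖X‖) := hρ.monotone fun ω => by
        have h := (neg_le_abs (X ω)).trans (norm_coe_le_norm X ω)
        show Y ω - X ω ≤ Y ω + ‖X‖
        linarith
    _ = ρ Y + ‖X‖ := hρ.map_add_const Y ‖X‖

end IsRiskMeasure

section InfConv

variable {Ω : Type*} [TopologicalSpace Ω] {n : ℕ} {ρ : Fin n → (Ω →ᵇ ℝ) → ℝ}

lemma sum_apply_update (ρ : Fin n → (Ω →ᵇ ℝ) → ℝ) (Y : Fin n → (Ω →ᵇ ℝ)) (j : Fin n)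
    (b : Ω →ᵇ ℝ) : ∑ i, ρ i (update Y j b i) = ∑ i, ρ i (Y i) - ρ j (Y j) + ρ j b := by
  simp only [apply_update (fun i => ρ i), Finset.sum_update_eq_sub_add]

lemma sum_update_sub (Y : Fin n → (Ω →ᵇ ℝ)) (j : Fin n) (g : Ω →ᵇ ℝ) :
    ∑ i, update Y j (Y j - g) i = ∑ i, Y i - g := by
  rw [Finset.sum_update_eq_sub_add]
  abel

lemma infConvValues_nonempty (j : Fin n) (X : Ω →ᵇ ℝ) : (infConvValues ρ X).Nonempty :=
  ⟨_, Pi.single j X, by simp, rfl⟩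

lemma neg_norm_le_of_mem_infConvValues {j : Fin n} (hρj : IsRiskMeasure (ρ j))
    (hnorm : ∀ Z : Fin n → (Ω →ᵇ ℝ), (∑ i, Z i) = 0 → 0 ≤ ∑ i, ρ i (Z i))
    {X : Ω →ᵇ ℝ} {s : ℝ} (hs : s ∈ infConvValues ρ X) : -‖X‖ ≤ s := by
  obtain ⟨Y, hY, rfl⟩ := hs
  have hZ := hnorm (update Y j (Y j - X)) (by rw [sum_update_sub, hY, sub_self])
  rw [sum_apply_update] at hZ
  linarith [hρj.map_sub_le_add_norm (Y j) X]

lemma bddBelow_infConvValues {j : Fin n} (hρj : IsRiskMeasure (ρ j))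
    (hnorm : ∀ Z : Fin n → (Ω →ᵇ ℝ), (∑ i, Z i) = 0 → 0 ≤ ∑ i, ρ i (Z i))
    (X : Ω →ᵇ ℝ) : BddBelow (infConvValues ρ X) :=
  ⟨-‖X‖, fun _ hs => neg_norm_le_of_mem_infConvValues hρj hnorm hs⟩

lemma infConv_le_of_sum_eq {X : Ω →ᵇ ℝ} (hbdd : BddBelow (infConvValues ρ X))
    {Y : Fin n → (Ω →ᵇ ℝ)} (hY : ∑ i, Y i = X) : infConv ρ X ≤ ∑ i, ρ i (Y i) :=
  csInf_le hbdd ⟨Y, hY, rfl⟩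

lemma infConv_sub_le_sub {X g : Ω →ᵇ ℝ} {c : ℝ} (j : Fin n)
    (hbdd : BddBelow (infConvValues ρ (X - g))) (hj : ∀ Z, ρ j (Z - g) ≤ ρ j Z - c) :
    infConv ρ (X - g) ≤ infConv ρ X - c := by
  rw [le_sub_iff_add_le]
  refine le_csInf (infConvValues_nonempty j X) ?_
  rintro _ ⟨Y, hY, rfl⟩
  have h := infConv_le_of_sum_eq hbdd (Y := update Y j (Y j - g)) (by rw [sum_update_sub, hY])
  rw [sum_apply_update] at h
  linarith [hj (Y j)]

theorem isRiskMeasure_infConv (j : Fin n) (hrm : ∀ i, IsRiskMeasure (ρ i))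
    (hnorm : ∀ Z : Fin n → (Ω →ᵇ ℝ), (∑ i, Z i) = 0 → 0 ≤ ∑ i, ρ i (Z i)) :
    IsRiskMeasure (infConv ρ) := by
  have hbdd := bddBelow_infConvValues (hrm j) hnorm
  have translate (X : Ω →ᵇ ℝ) (m : ℝ) : infConv ρ (X - const Ω m) ≤ infConv ρ X - m :=
    infConv_sub_le_sub j (hbdd _) fun Z => ((hrm j).2.1 Z m).le
  refine ⟨fun X Y hYX => ?_, fun X m => le_antisymm (translate X m) ?_, ?_⟩
  · have h := infConv_sub_le_sub (X := X) (g := X - Y) (c := 0) j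
      (by rw [sub_sub_cancel]; exact hbdd Y)
      fun Z => by simpa using (hrm j).monotone (sub_le_self Z (sub_nonneg.2 hYX))
    rwa [sub_sub_cancel, sub_zero] at h
  · have h := translate (X - const Ω m) (-m)
    rw [show X - const Ω m - const Ω (-m) = X by ext; simp] at h
    linarith
  · refine le_antisymm ?_ (le_csInf (infConvValues_nonempty j 0) ?_)
    · simpa [fun i => (hrm i).2.2] using infConv_le_of_sum_eq (hbdd 0) (Y := 0) (by simp)
    · rintro _ ⟨Z, hZ, rfl⟩
      exact hnorm Z hZ

theorem isStarShaped_infConv (hne : ∀ X, (infConvValues ρ X).Nonempty)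
    (hbdd : ∀ X, BddBelow (infConvValues ρ X)) (hss : ∀ i, IsStarShaped (ρ i)) :
    IsStarShaped (infConv ρ) := by
  intro X l hl
  have hl0 : l ≠ 0 := (one_pos.trans hl).ne'
  refine le_csInf (hne (l • X)) ?_
  rintro _ ⟨Y, hY, rfl⟩
  have hscaled : ∑ i, l⁻¹ • Y i = X := by
    rw [← Finset.smul_sum, hY, inv_smul_smul₀ hl0]
  calc l * infConv ρ X ≤ l * ∑ i, ρ i (l⁻¹ • Y i) :=
        mul_le_mul_of_nonneg_left (infConv_le_of_sum_eq (hbdd X) hscaled) (by linarith)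
    _ = ∑ i, l * ρ i (l⁻¹ • Y i) := Finset.mul_sum ..
    _ ≤ ∑ i, ρ i (Y i) := Finset.sum_le_sum fun i _ => by
        simpa [smul_inv_smul₀ hl0] using hss i (l⁻¹ • Y i) l hl

end InfConv

theorem infConvolution_of_star_shaped_risk_measures_general
    {Ω : Type*} [TopologicalSpace Ω]
    {n : ℕ} (hn : 0 < n) (ρ : Fin n → (Ω →ᵇ ℝ) → ℝ)
    (hrm : ∀ i, IsRiskMeasure (ρ i)) (hss : ∀ i, IsStarShaped (ρ i))
    (hnorm : ∀ Z : Fin n → (Ω →ᵇ ℝ), (∑ i, Z i) = 0 → 0 ≤ ∑ i, ρ i (Z i)) :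
    (∀ X : Ω →ᵇ ℝ, (infConvValues ρ X).Nonempty ∧ BddBelow (infConvValues ρ X)) ∧
    IsRiskMeasure (infConv ρ) ∧ IsStarShaped (infConv ρ) := by
  let j : Fin n := ⟨0, hn⟩
  have hne : ∀ X, (infConvValues ρ X).Nonempty := infConvValues_nonempty j
  have hbdd : ∀ X, BddBelow (infConvValues ρ X) := bddBelow_infConvValues (hrm j) hnorm
  exact ⟨fun X => ⟨hne X, hbdd X⟩, isRiskMeasure_infConv j hrm hnorm,
    isStarShaped_infConv hne hbdd hss⟩

theorem infConvolution_of_star_shaped_risk_measures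
    {Ω : Type*} [TopologicalSpace Ω] [DiscreteTopology Ω] [Nonempty Ω]
    {n : ℕ} (hn : 0 < n) (ρ : Fin n → (Ω →ᵇ ℝ) → ℝ)
    (hrm : ∀ i, IsRiskMeasure (ρ i)) (hss : ∀ i, IsStarShaped (ρ i))
    (hnorm : ∀ Z : Fin n → (Ω →ᵇ ℝ), (∑ i, Z i) = 0 → 0 ≤ ∑ i, ρ i (Z i)) :
    (∀ X : Ω →ᵇ ℝ, (infConvValues ρ X).Nonempty ∧ BddBelow (infConvValues ρ X)) ∧
    IsRiskMeasure (infConv ρ) ∧ IsStarShaped (infConv ρ) :=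
  infConvolution_of_star_shaped_risk_measures_general hn ρ hrm hss hnorm
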